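/- arXiv:2204.08733 — 3 statements merged into one kernel-verified Lean document; each statement's English description precedes it below -/
import Mathlib

section
/- Under Assumptions 1–3, let N ≥ d (with d ≥ 1) and ε ∈ (0,1), and define the optimal uniform level-set bound α*(ε) := sup { α ≥ 0 : p_N(α) ≤ ε } (with sup of the empty set equal to 0). Then ℙ^N{ ω ∈ Δ^N : J* ≤ g_N(ω) + α*(ε) } ≥ ε. -/
open MeasureTheory Set

/-- Scenario optimal value `g_N(ω) = inf { c·x : x ∈ X, f(x, δ_i) ≤ 0, i = 1,…,N }`. -/
noncomputable def scenVal {d m N : ℕ} (X : Set (EuclideanSpace ℝ (Fin d)))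
    (c : EuclideanSpace ℝ (Fin d))
    (f : EuclideanSpace ℝ (Fin d) → EuclideanSpace ℝ (Fin m) → ℝ)
    (ω : Fin N → EuclideanSpace ℝ (Fin m)) : ℝ :=
  sInf ((fun x => ∑ i, c i * x i) '' {x ∈ X | ∀ i, f x (ω i) ≤ 0})

/-- Robust optimal value `J* = inf { c·x : x ∈ X, f(x,δ) ≤ 0 for all δ ∈ Δ }`. -/
noncomputable def robustVal {d m : ℕ} (X : Set (EuclideanSpace ℝ (Fin d)))
    (c : EuclideanSpace ℝ (Fin d))
    (f : EuclideanSpace ℝ (Fin d) → EuclideanSpace ℝ (Fin m) → ℝ)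
    (Δ : Set (EuclideanSpace ℝ (Fin m))) : ℝ :=
  sInf ((fun x => ∑ i, c i * x i) '' {x ∈ X | ∀ δ ∈ Δ, f x δ ≤ 0})

/-- Tail probability `p_N(α) = ℙ^N { ω ∈ Δ^N : J* − α ≤ g_N(ω) }`. -/
noncomputable def tailProb {d m : ℕ} (X : Set (EuclideanSpace ℝ (Fin d)))
    (c : EuclideanSpace ℝ (Fin d))
    (f : EuclideanSpace ℝ (Fin d) → EuclideanSpace ℝ (Fin m) → ℝ)
    (Δ : Set (EuclideanSpace ℝ (Fin m)))
    (ℙ : Measure (EuclideanSpace ℝ (Fin m))) (N : ℕ) (α : ℝ) : ENNReal :=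
  (Measure.pi fun _ : Fin N => ℙ)
    {ω : Fin N → EuclideanSpace ℝ (Fin m) |
      (∀ i, ω i ∈ Δ) ∧ robustVal X c f Δ - α ≤ scenVal X c f ω}

/-! The tail function `α ↦ p_N(α)` is nondecreasing and right-continuous, because the events
`{J* - α ≤ g_N}` decrease to `{J* - a ≤ g_N}` as `α ↓ a`, and it equals `1 > ε` once `α` exceeds
`J* - min_X c·x`. Hence `p_N(α) > ε` for every `α > α*(ε) ≥ 0`, and right-continuity gives
`p_N(α*(ε)) ≥ ε`. Continuity from above needs the events to be measurable, which follows from the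
lower semicontinuity of `g_N` on `Δ^N`: the compact sublevel set `{x ∈ X : c·x ≤ t}`, infeasible for
`ω` when `t < g_N(ω)`, stays infeasible near `ω` by the lower semicontinuity of `f` and the tube
lemma. -/

open Filter Topology

section

variable {α ι Ω β : Type*} [TopologicalSpace α] [TopologicalSpace β]

theorem lowerSemicontinuousOn_sInf_image_feasible {X : Set α} (hX : IsCompact X)
    {φ : α → ℝ} (hφ : Continuous φ) {f : α → β → ℝ} {Δ : Set β}
    (hf : LowerSemicontinuousOn (Function.uncurry f) (X ×ˢ Δ))
    {x₀ : α} (hx₀X : x₀ ∈ X) (hx₀ : ∀ δ ∈ Δ, f x₀ δ ≤ 0) :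
    LowerSemicontinuousOn (fun ω : ι → β => sInf (φ '' {x ∈ X | ∀ i, f x (ω i) ≤ 0}))
      {ω | ∀ i, ω i ∈ Δ} := by
  intro ω hω t ht
  obtain ⟨t', htt', ht'⟩ := exists_between ht
  have hbdd : ∀ ω' : ι → β, BddBelow (φ '' {x ∈ X | ∀ i, f x (ω' i) ≤ 0}) := fun ω' =>
    (hX.image hφ).bddBelow.mono (image_mono (sep_subset _ _))
  have hinfeasible : ∀ x ∈ X ∩ φ ⁻¹' Iic t', ∃ i, 0 < f x (ω i) := by
    rintro x ⟨hxX, hxt⟩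
    by_contra! hfeas
    exact (csInf_le (hbdd ω) (mem_image_of_mem φ ⟨hxX, hfeas⟩)).trans hxt |>.not_gt ht'
  have hnear : ∀ᶠ ω' in 𝓝 ω, ∀ x ∈ X ∩ φ ⁻¹' Iic t',
      x ∈ X → (∀ i, ω' i ∈ Δ) → ∃ i, 0 < f x (ω' i) := by
    refine (hX.inter_right (isClosed_le hφ continuous_const)).eventually_forall_of_forall_eventually
      fun x hx => ?_
    obtain ⟨i, hi⟩ := hinfeasible x hx
    have hlsc := eventually_nhdsWithin_iff.1 (hf (x, ω i) ⟨hx.1, hω i⟩ 0 hi)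
    have hcont : Continuous fun z : (ι → β) × α => (z.2, z.1 i) := by fun_prop
    filter_upwards [hcont.continuousAt.eventually hlsc] with z hz hzX hzΔ
    exact ⟨i, hz ⟨hzX, hzΔ i⟩⟩
  filter_upwards [nhdsWithin_le_nhds hnear, self_mem_nhdsWithin] with ω' hω' hω'Δ
  refine htt'.trans_le (le_csInf ⟨_, mem_image_of_mem φ ⟨hx₀X, fun i => hx₀ _ (hω'Δ i)⟩⟩ ?_)
  rintro _ ⟨x, ⟨hxX, hxf⟩, rfl⟩
  by_contra! hxt
  obtain ⟨i, hi⟩ := hω' x ⟨hxX, hxt.le⟩ hxX hω'Δ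
  exact (hxf i).not_gt hi

theorem LowerSemicontinuousOn.measurableSet_sep_le [MeasurableSpace Ω] [TopologicalSpace Ω]
    [OpensMeasurableSpace Ω] {g : Ω → ℝ} {D : Set Ω} (hg : LowerSemicontinuousOn g D)
    (hD : MeasurableSet D) (s : ℝ) : MeasurableSet {ω | ω ∈ D ∧ s ≤ g ω} := by
  have hmeas : Measurable (D.domRestrict g) := (lowerSemicontinuous_restrict_iff.2 hg).measurable
  convert hD.subtype_image ((measurableSet_Ici (a := s)).preimage hmeas)
  ext ω
  simp [and_comm]

theorem tendsto_measure_sep_sub_le_nhdsGT [MeasurableSpace Ω] (μ : Measure Ω) [IsFiniteMeasure μ]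
    {D : Set Ω} {g : Ω → ℝ} (hmeas : ∀ s, MeasurableSet {ω | ω ∈ D ∧ s ≤ g ω}) (b a : ℝ) :
    Tendsto (fun α => μ {ω | ω ∈ D ∧ b - α ≤ g ω}) (𝓝[>] a)
      (𝓝 (μ {ω | ω ∈ D ∧ b - a ≤ g ω})) := by
  have hinter : (⋂ r > a, {ω | ω ∈ D ∧ b - r ≤ g ω}) = {ω | ω ∈ D ∧ b - a ≤ g ω} := by
    ext ω
    simp only [mem_iInter, mem_ofPred_eq]
    refine ⟨fun h => ?_, fun h r hr => ⟨h.1, (sub_le_sub_left hr.le b).trans h.2⟩⟩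
    obtain ⟨r, hr⟩ := exists_gt a
    refine ⟨(h r hr).1, sub_le_comm.1 (le_of_forall_gt_imp_ge_of_dense fun r hr => ?_)⟩
    exact sub_le_comm.1 (h r hr).2
  rw [← hinter]
  exact tendsto_measure_biInter_gt (fun r _ => (hmeas _).nullMeasurableSet)
    (fun i j _ hij ω hω => ⟨hω.1, (sub_le_sub_left hij b).trans hω.2⟩)
    ⟨a + 1, lt_add_one a, measure_ne_top μ _⟩

theorem le_apply_sSup_setOf_nonneg_le [LinearOrder β] [ClosedIciTopology β] {F : ℝ → β} {ε : β}
    (hlarge : ∀ᶠ α in atTop, ε < F α)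
    (hF : ContinuousWithinAt F (Ioi (sSup {α | 0 ≤ α ∧ F α ≤ ε}))
      (sSup {α | 0 ≤ α ∧ F α ≤ ε})) :
    ε ≤ F (sSup {α | 0 ≤ α ∧ F α ≤ ε}) := by
  set S := {α | 0 ≤ α ∧ F α ≤ ε}
  obtain ⟨M, hM⟩ := eventually_atTop.1 hlarge
  have hbdd : BddAbove S := ⟨M, fun α hα => le_of_not_gt fun h => (hM α h.le).not_ge hα.2⟩
  -- also when `S = ∅`, where `sSup S = 0`
  have hS₀ : 0 ≤ sSup S := Real.sSup_nonneg fun α hα => hα.1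
  refine ge_of_tendsto hF (eventually_nhdsWithin_of_forall fun α hα => le_of_not_gt fun h => ?_)
  exact (le_csSup hbdd ⟨hS₀.trans (le_of_lt hα), h.le⟩).not_gt hα

end

theorem stmt_6_general {d m : ℕ}
    (X : Set (EuclideanSpace ℝ (Fin d))) (c : EuclideanSpace ℝ (Fin d))
    (Δ : Set (EuclideanSpace ℝ (Fin m)))
    (f : EuclideanSpace ℝ (Fin d) → EuclideanSpace ℝ (Fin m) → ℝ)
    -- Assumption 1
    (hlsc : LowerSemicontinuousOn (Function.uncurry f) (X ×ˢ Δ))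
    (hXcomp : IsCompact X)
    -- Assumption 2
    (hfeas : ∃ x ∈ X, ∀ δ ∈ Δ, f x δ ≤ 0)
    -- probability measure supported on Δ
    (ℙ : Measure (EuclideanSpace ℝ (Fin m))) [IsProbabilityMeasure ℙ]
    (hΔmeas : MeasurableSet Δ) (hΔone : ℙ Δ = 1)
    (N : ℕ) (ε : ℝ) (hε : ε ∈ Set.Ioo (0 : ℝ) 1)
    (αstar : ℝ)
    (hαstar : αstar =
      sSup {α : ℝ | 0 ≤ α ∧ tailProb X c f Δ ℙ N α ≤ ENNReal.ofReal ε}) :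
    ENNReal.ofReal ε ≤
      (Measure.pi fun _ : Fin N => ℙ)
        {ω : Fin N → EuclideanSpace ℝ (Fin m) |
          (∀ i, ω i ∈ Δ) ∧ robustVal X c f Δ ≤ scenVal X c f ω + αstar} := by
  obtain ⟨x₀, hx₀X, hx₀⟩ := hfeas
  set D : Set (Fin N → EuclideanSpace ℝ (Fin m)) := {ω | ∀ i, ω i ∈ Δ}
  have hcost : Continuous fun x : EuclideanSpace ℝ (Fin d) => ∑ i, c i * x i := by fun_prop
  have hg : LowerSemicontinuousOn (scenVal X c f) D :=
    lowerSemicontinuousOn_sInf_image_feasible hXcomp hcost hlsc hx₀X hx₀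
  have hD : MeasurableSet D := by
    simpa [D, Set.pi, Set.mem_univ] using MeasurableSet.univ_pi fun _ : Fin N => hΔmeas
  have hμD : (Measure.pi fun _ : Fin N => ℙ) D = 1 := by
    simpa [D, Set.pi, hΔone] using Measure.pi_pi (fun _ : Fin N => ℙ) fun _ => Δ
  obtain ⟨L, hL⟩ : BddBelow (scenVal X c f '' D) := by
    refine ⟨sInf ((fun x => ∑ i, c i * x i) '' X), ?_⟩
    rintro _ ⟨ω, hω, rfl⟩
    exact csInf_le_csInf (hXcomp.image hcost).bddBelow
      ⟨_, mem_image_of_mem _ ⟨hx₀X, fun i => hx₀ _ (hω i)⟩⟩ (image_mono (sep_subset _ _))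
  have hlarge : ∀ᶠ α in atTop, ENNReal.ofReal ε < tailProb X c f Δ ℙ N α := by
    filter_upwards [eventually_ge_atTop (robustVal X c f Δ - L)] with α hα
    refine (ENNReal.ofReal_lt_one.2 hε.2).trans_le (hμD ▸ measure_mono fun ω hω => ⟨hω, ?_⟩)
    linarith [hL (mem_image_of_mem _ hω)]
  have := le_apply_sSup_setOf_nonneg_le hlarge
    (tendsto_measure_sep_sub_le_nhdsGT _ (hg.measurableSet_sep_le hD) _ _)
  subst hαstar
  simpa only [tailProb, sub_le_iff_le_add] using this

/-- Under Assumptions 1–3, with N ≥ d (d ≥ 1), ε ∈ (0,1), and the optimal uniform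
level-set bound α*(ε) = sup { α ≥ 0 : p_N(α) ≤ ε } (sup ∅ = 0), one has
ℙ^N { ω ∈ Δ^N : J* ≤ g_N(ω) + α*(ε) } ≥ ε. -/
theorem stmt_6 {d m : ℕ} (hd : 1 ≤ d)
    (X : Set (EuclideanSpace ℝ (Fin d))) (c : EuclideanSpace ℝ (Fin d))
    (Δ : Set (EuclideanSpace ℝ (Fin m))) (hΔne : Δ.Nonempty)
    (f : EuclideanSpace ℝ (Fin d) → EuclideanSpace ℝ (Fin m) → ℝ)
    -- Assumption 1
    (hlsc : LowerSemicontinuousOn (Function.uncurry f) (X ×ˢ Δ))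
    (hXcomp : IsCompact X)
    -- Assumption 2
    (hfeas : ∃ x ∈ X, ∀ δ ∈ Δ, f x δ ≤ 0)
    -- Assumption 3
    (hXconv : Convex ℝ X)
    (hconv : ∀ δ ∈ Δ, ConvexOn ℝ X fun x => f x δ)
    -- probability measure supported on Δ
    (ℙ : Measure (EuclideanSpace ℝ (Fin m))) [IsProbabilityMeasure ℙ]
    (hΔmeas : MeasurableSet Δ) (hΔone : ℙ Δ = 1)
    (N : ℕ) (hN : d ≤ N) (ε : ℝ) (hε : ε ∈ Set.Ioo (0 : ℝ) 1)
    (αstar : ℝ)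
    (hαstar : αstar =
      sSup {α : ℝ | 0 ≤ α ∧ tailProb X c f Δ ℙ N α ≤ ENNReal.ofReal ε}) :
    ENNReal.ofReal ε ≤
      (Measure.pi fun _ : Fin N => ℙ)
        {ω : Fin N → EuclideanSpace ℝ (Fin m) |
          (∀ i, ω i ∈ Δ) ∧ robustVal X c f Δ ≤ scenVal X c f ω + αstar} :=
  stmt_6_general X c Δ f hlsc hXcomp hfeas ℙ hΔmeas hΔone N ε hε αstar hαstar
end

section
/- Suppose Δ ⊆ ℝ^m is nonempty and bounded, f is lower semicontinuous on X × cl(Δ), Assumptions 2–4 hold, and there exists L_g ≥ 0 such that |g_d(ω) − g_d(ω')| ≤ L_g · max_{1≤i≤d} ‖δ_i − δ'_i‖ for all ω, ω' ∈ cl(Δ)^d. Then for every N ≥ d, every ε ∈ (0,1) and every r > 0 with φ(r) ≥ ε, it holds that ℙ^N{ ω ∈ Δ^N : J* ≤ g_N(ω) + L_g · r } ≥ 1 − d(1−ε)^N. -/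
/-!
By Helly's theorem, for `t < J*` the family consisting of the sublevel set `{c·x ≤ t}` and the
constraint sets of all `δ ∈ Δ` has an empty subfamily of at most `d + 1` members; it must contain
the sublevel set, so `d` scenarios from `Δ` already force `g_d ≥ t`. Since `g_d` is Lipschitz on
the compact set `cl(Δ)^d`, it attains its maximum at some `ω*`, and `g_d(ω*) ≥ J*`. If every ball
`B_r(ω*_j)` contains a sample `ω_i`, the resulting subsample is within `r` of `ω*`, and dropping
constraints only lowers the value, so `J* ≤ g_N(ω) + L_g r`. Each ball is missed by all `N`
samples with probability at most `(1 - ε)^N`; a union bound over the `d` balls concludes.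
-/

open MeasureTheory Set

open Finset in
theorem Finset.exists_subset_range_of_card_le {α : Type*} [Nonempty α] (S : Finset α) {n : ℕ}
    (h : #S ≤ n) : ∃ g : Fin n → α, ↑S ⊆ Set.range g := by
  classical
  refine ⟨Function.extend (Fin.castLE h) (fun k => (S.equivFin.symm k : α))
    fun _ => Classical.arbitrary α, fun a ha => ⟨Fin.castLE h (S.equivFin ⟨a, ha⟩), ?_⟩⟩
  simp [(Fin.castLE_injective h).extend_apply]

open Finset in
theorem one_sub_card_mul_pow_le_measure_pi_forall_exists_mem {Ω ι : Type*} [MeasurableSpace Ω]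
    [Fintype ι] (μ : Measure Ω) [IsProbabilityMeasure μ] (A : ι → Set Ω) {p : ENNReal}
    (hA : ∀ j, μ (A j)ᶜ ≤ p) (N : ℕ) :
    1 - Fintype.card ι * p ^ N ≤
      (Measure.pi fun _ : Fin N => μ) {ω | ∀ j, ∃ i, ω i ∈ A j} := by
  set P := Measure.pi fun _ : Fin N => μ
  set S := {ω : Fin N → Ω | ∀ j, ∃ i, ω i ∈ A j}
  have hS : Sᶜ = ⋃ j, univ.pi fun _ => (A j)ᶜ := by ext; simp [S]
  have hmiss : P Sᶜ ≤ Fintype.card ι * p ^ N := calc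
    P Sᶜ ≤ ∑ j, P (univ.pi fun _ => (A j)ᶜ) := hS ▸ measure_iUnion_fintype_le P _
    _ = ∑ j, μ (A j)ᶜ ^ N := by simp [P, Measure.pi_pi]
    _ ≤ ∑ _j : ι, p ^ N := sum_le_sum fun j _ => pow_le_pow_left' (hA j) N
    _ = Fintype.card ι * p ^ N := by simp
  calc 1 - Fintype.card ι * p ^ N ≤ 1 - P Sᶜ := tsub_le_tsub_left hmiss 1
    _ ≤ P S := by
      rw [tsub_le_iff_right, ← measure_univ (μ := P)]
      exact measure_univ_le_add_compl S

theorem sup'_norm_sub_le_dist {ι E : Type*} [Fintype ι] [SeminormedAddCommGroup E]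
    (h : (Finset.univ : Finset ι).Nonempty) (ω ω' : ι → E) :
    Finset.univ.sup' h (fun i => ‖ω i - ω' i‖) ≤ dist ω ω' :=
  Finset.sup'_le _ _ fun i _ => dist_eq_norm (ω i) (ω' i) ▸ dist_le_pi_dist ω ω' i

section ScenarioProgram

variable {d m : ℕ} {X : Set (EuclideanSpace ℝ (Fin d))} {c : EuclideanSpace ℝ (Fin d)}
  {f : EuclideanSpace ℝ (Fin d) → EuclideanSpace ℝ (Fin m) → ℝ} {Δ : Set (EuclideanSpace ℝ (Fin m))}

theorem robustVal_le (hX : BddBelow ((fun x => ∑ i, c i * x i) '' X)) {x : EuclideanSpace ℝ (Fin d)}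
    (hx : x ∈ X) (hxΔ : ∀ δ ∈ Δ, f x δ ≤ 0) : robustVal X c f Δ ≤ ∑ i, c i * x i :=
  csInf_le (hX.mono (image_mono fun _ h => h.1)) ⟨x, ⟨hx, hxΔ⟩, rfl⟩

theorem scenVal_comp_le {n N : ℕ} (hX : BddBelow ((fun x => ∑ i, c i * x i) '' X))
    {ω : Fin N → EuclideanSpace ℝ (Fin m)} (hω : ∃ x ∈ X, ∀ i, f x (ω i) ≤ 0) (σ : Fin n → Fin N) :
    scenVal X c f (ω ∘ σ) ≤ scenVal X c f ω :=
  csInf_le_csInf (hX.mono (image_mono fun _ h => h.1)) (Set.Nonempty.image _ hω)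
    (image_mono fun _ hx => ⟨hx.1, fun j => hx.2 (σ j)⟩)

open Finset in
theorem exists_finset_card_le_of_lt_robustVal (hXcomp : IsCompact X) (hXconv : Convex ℝ X)
    (hconv : ∀ δ ∈ Δ, ConvexOn ℝ X fun x => f x δ)
    (hlsc : ∀ δ ∈ Δ, LowerSemicontinuousOn (fun x => f x δ) X)
    (hfeas : ∃ x ∈ X, ∀ δ ∈ Δ, f x δ ≤ 0) {t : ℝ} (ht : t < robustVal X c f Δ) :
    ∃ S : Finset Δ, #S ≤ d ∧ ∀ x ∈ X, (∀ δ ∈ S, f x δ ≤ 0) → t < ∑ i, c i * x i := by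
  classical
  set obj := fun x : EuclideanSpace ℝ (Fin d) => ∑ i, c i * x i
  have hobj : Continuous obj := by fun_prop
  let C : Option Δ → Set (EuclideanSpace ℝ (Fin d)) := fun o =>
    o.elim (X ∩ obj ⁻¹' Iic t) fun δ => X ∩ (f · δ) ⁻¹' Iic 0
  have hC_convex : ∀ o, Convex ℝ (C o)
    | none => hXconv.inter <| convex_halfSpace_le
        ⟨fun x y => by simp [obj, mul_add, sum_add_distrib],
          fun a x => by simp [obj, mul_sum, mul_left_comm]⟩ t
    | some δ => (hconv δ δ.2).convex_le 0
  have hC_compact : ∀ o, IsCompact (C o)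
    | none =>
      (hobj.lowerSemicontinuous.lowerSemicontinuousOn X).isCompact_inter_preimage_Iic hXcomp t
    | some δ => (hlsc δ δ.2).isCompact_inter_preimage_Iic hXcomp 0
  obtain ⟨I, hI_card, hI⟩ : ∃ I : Finset (Option Δ), #I ≤ d + 1 ∧ ⋂ o ∈ I, C o = ∅ := by
    by_contra! h
    obtain ⟨x, hx⟩ := Convex.helly_theorem_compact' hC_convex hC_compact fun I hI =>
      h I (by simpa using hI)
    have hx' : ∀ o, x ∈ C o := mem_iInter.1 hx
    have hJx := robustVal_le (hXcomp.image hobj).bddBelow (hx' none).1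
      fun δ hδ => (hx' (some ⟨δ, hδ⟩)).2
    exact ht.not_ge (hJx.trans (hx' none).2)
  -- Without the objective's sublevel set, the robust feasible point would lie in every `C o`.
  have hnone : none ∈ I := by
    obtain ⟨x₀, hx₀, hx₀Δ⟩ := hfeas
    by_contra hnone
    refine (eq_empty_iff_forall_notMem.1 hI) x₀ (mem_iInter₂.2 ?_)
    rintro (_ | δ) hδ
    exacts [(hnone hδ).elim, ⟨hx₀, hx₀Δ δ δ.2⟩]
  refine ⟨I.eraseNone, ?_, fun x hx hxS => lt_of_not_ge fun hxt => ?_⟩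
  · rw [card_eraseNone_eq_card_erase, card_erase_of_mem hnone]
    omega
  · refine (eq_empty_iff_forall_notMem.1 hI) x (mem_iInter₂.2 ?_)
    rintro (_ | δ) hδ
    exacts [⟨hx, hxt⟩, ⟨hx, hxS δ (mem_eraseNone.2 hδ)⟩]

theorem exists_le_scenVal_of_lt_robustVal (hXcomp : IsCompact X) (hXconv : Convex ℝ X)
    (hconv : ∀ δ ∈ Δ, ConvexOn ℝ X fun x => f x δ)
    (hlsc : ∀ δ ∈ Δ, LowerSemicontinuousOn (fun x => f x δ) X)
    (hfeas : ∃ x ∈ X, ∀ δ ∈ Δ, f x δ ≤ 0) (hΔ : Δ.Nonempty) {t : ℝ}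
    (ht : t < robustVal X c f Δ) :
    ∃ ω : Fin d → EuclideanSpace ℝ (Fin m), (∀ j, ω j ∈ Δ) ∧ t ≤ scenVal X c f ω := by
  obtain ⟨S, hS_card, hS⟩ :=
    exists_finset_card_le_of_lt_robustVal hXcomp hXconv hconv hlsc hfeas ht
  have := hΔ.to_subtype
  obtain ⟨g, hg⟩ := S.exists_subset_range_of_card_le hS_card
  obtain ⟨x₀, hx₀, hx₀Δ⟩ := hfeas
  refine ⟨fun j => g j, fun j => (g j).2, le_csInf ⟨_, x₀, ⟨hx₀, fun j => hx₀Δ _ (g j).2⟩, rfl⟩ ?_⟩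
  rintro _ ⟨x, ⟨hx, hxg⟩, rfl⟩
  refine (hS x hx fun δ hδ => ?_).le
  obtain ⟨j, rfl⟩ := hg hδ
  exact hxg j

theorem exists_robustVal_le_scenVal (hXcomp : IsCompact X) (hXconv : Convex ℝ X)
    (hconv : ∀ δ ∈ Δ, ConvexOn ℝ X fun x => f x δ)
    (hlsc : ∀ δ ∈ Δ, LowerSemicontinuousOn (fun x => f x δ) X)
    (hfeas : ∃ x ∈ X, ∀ δ ∈ Δ, f x δ ≤ 0) (hΔ : Δ.Nonempty) (hΔcomp : IsCompact (closure Δ))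
    (hcont : ContinuousOn (scenVal X c f) (univ.pi fun _ : Fin d => closure Δ)) :
    ∃ ω : Fin d → EuclideanSpace ℝ (Fin m),
      (∀ j, ω j ∈ closure Δ) ∧ robustVal X c f Δ ≤ scenVal X c f ω := by
  obtain ⟨δ, hδ⟩ := hΔ
  obtain ⟨ω, hω, hmax⟩ := (isCompact_univ_pi fun _ => hΔcomp).exists_isMaxOn
    ⟨fun _ => δ, fun _ _ => subset_closure hδ⟩ hcont
  refine ⟨ω, fun j => hω j trivial, le_of_forall_lt fun t ht => ?_⟩
  obtain ⟨t', htt', ht'⟩ := exists_between ht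
  obtain ⟨ω', hω', hω't'⟩ :=
    exists_le_scenVal_of_lt_robustVal hXcomp hXconv hconv hlsc hfeas ⟨δ, hδ⟩ ht'
  exact htt'.trans_le (hω't'.trans (hmax fun j _ => subset_closure (hω' j)))

theorem robustVal_le_scenVal_add_of_forall_exists_mem_ball {N : ℕ} {K : NNReal}
    (hX : BddBelow ((fun x => ∑ i, c i * x i) '' X)) (hfeas : ∃ x ∈ X, ∀ δ ∈ Δ, f x δ ≤ 0)
    (hK : LipschitzOnWith K (scenVal X c f) (univ.pi fun _ : Fin d => closure Δ))
    {ωs : Fin d → EuclideanSpace ℝ (Fin m)} (hωs : ∀ j, ωs j ∈ closure Δ)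
    (hJ : robustVal X c f Δ ≤ scenVal X c f ωs) {r : ℝ} (hr : 0 ≤ r)
    {ω : Fin N → EuclideanSpace ℝ (Fin m)} (hω : ∀ i, ω i ∈ Δ)
    (hhit : ∀ j, ∃ i, ω i ∈ Metric.ball (ωs j) r) :
    robustVal X c f Δ ≤ scenVal X c f ω + K * r := by
  choose σ hσ using hhit
  have hdist : dist (ω ∘ σ) ωs ≤ r := (dist_pi_le_iff hr).2 fun j => (hσ j).le
  have hlip := hK.dist_le_mul (ω ∘ σ) (fun j _ => subset_closure (hω _)) ωs fun j _ => hωs j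
  have hmono := scenVal_comp_le hX (hfeas.imp fun x hx => ⟨hx.1, fun i => hx.2 _ (hω i)⟩) σ
  rw [Real.dist_eq, abs_sub_le_iff] at hlip
  nlinarith [mul_le_mul_of_nonneg_left hdist K.2]

end ScenarioProgram

theorem stmt_11_general {d m : ℕ} (hd : 1 ≤ d)
    (X : Set (EuclideanSpace ℝ (Fin d))) (c : EuclideanSpace ℝ (Fin d))
    (Δ : Set (EuclideanSpace ℝ (Fin m))) (hΔne : Δ.Nonempty)
    (hΔbdd : Bornology.IsBounded Δ)
    (f : EuclideanSpace ℝ (Fin d) → EuclideanSpace ℝ (Fin m) → ℝ)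
    (hlsc : LowerSemicontinuousOn (Function.uncurry f) (X ×ˢ closure Δ))
    -- Assumption 2
    (hfeas : ∃ x ∈ X, ∀ δ ∈ Δ, f x δ ≤ 0)
    -- Assumption 3 (X compact convex, f(·,δ) convex)
    (hXcomp : IsCompact X) (hXconv : Convex ℝ X)
    (hconv : ∀ δ ∈ Δ, ConvexOn ℝ X fun x => f x δ)
    -- probability measure supported on Δ
    (ℙ : Measure (EuclideanSpace ℝ (Fin m))) [IsProbabilityMeasure ℙ]
    (hΔmeas : MeasurableSet Δ) (hΔone : ℙ Δ = 1)
    -- Assumption 4 (regularity)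
    (φ : ℝ → ℝ)
    (hφreg : ∀ δ ∈ closure Δ, ∀ r : ℝ, 0 < r →
      ENNReal.ofReal (φ r) ≤ ℙ (Metric.ball δ r ∩ Δ))
    -- Lipschitz condition on g_d
    (Lg : ℝ) (hLg : 0 ≤ Lg)
    (hLip : ∀ ω ω' : Fin d → EuclideanSpace ℝ (Fin m),
      (∀ i, ω i ∈ closure Δ) → (∀ i, ω' i ∈ closure Δ) →
      |scenVal X c f ω - scenVal X c f ω'| ≤
        Lg * Finset.univ.sup' (Finset.univ_nonempty_iff.mpr ⟨⟨0, hd⟩⟩)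
          (fun i => ‖ω i - ω' i‖))
    (N : ℕ)
    (ε : ℝ) (hε : ε ∈ Set.Ioo (0 : ℝ) 1)
    (r : ℝ) (hr : 0 < r) (hφr : ε ≤ φ r) :
    ENNReal.ofReal (1 - d * (1 - ε) ^ N) ≤
      (Measure.pi fun _ : Fin N => ℙ)
        {ω : Fin N → EuclideanSpace ℝ (Fin m) |
          (∀ i, ω i ∈ Δ) ∧ robustVal X c f Δ ≤ scenVal X c f ω + Lg * r} := by
  have hbdd : BddBelow ((fun x => ∑ i, c i * x i) '' X) := (hXcomp.image (by fun_prop)).bddBelow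
  have hlsc' : ∀ δ ∈ Δ, LowerSemicontinuousOn (fun x => f x δ) X := fun δ hδ =>
    hlsc.comp (by fun_prop : Continuous fun x => (x, δ)).continuousOn
      fun x hx => ⟨hx, subset_closure hδ⟩
  have hK : LipschitzOnWith Lg.toNNReal (scenVal X c f) (univ.pi fun _ : Fin d => closure Δ) :=
    LipschitzOnWith.of_dist_le_mul fun ω hω ω' hω' => by
      rw [Real.coe_toNNReal Lg hLg, Real.dist_eq]
      exact (hLip ω ω' (fun i => hω i trivial) fun i => hω' i trivial).trans
        (mul_le_mul_of_nonneg_left (sup'_norm_sub_le_dist _ ω ω') hLg)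
  obtain ⟨ωs, hωs, hJ⟩ := exists_robustVal_le_scenVal hXcomp hXconv hconv hlsc' hfeas hΔne
    hΔbdd.isCompact_closure hK.continuousOn
  have hmiss : ∀ j, ℙ (Metric.ball (ωs j) r)ᶜ ≤ ENNReal.ofReal (1 - ε) := fun j => by
    rw [prob_compl_eq_one_sub measurableSet_ball, ENNReal.ofReal_sub _ hε.1.le, ENNReal.ofReal_one]
    exact tsub_le_tsub_left ((ENNReal.ofReal_le_ofReal hφr).trans
      ((hφreg _ (hωs j) r hr).trans (measure_mono inter_subset_left))) 1
  have hΔae : ∀ᵐ ω ∂(Measure.pi fun _ : Fin N => ℙ), ∀ i, ω i ∈ Δ :=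
    ae_all_iff.2 fun i => (measurePreserving_eval _ i).quasiMeasurePreserving.ae
      ((mem_ae_iff_prob_eq_one hΔmeas).2 hΔone)
  have h1ε : 0 ≤ 1 - ε := sub_nonneg.2 hε.2.le
  calc ENNReal.ofReal (1 - d * (1 - ε) ^ N) = 1 - d * ENNReal.ofReal (1 - ε) ^ N := by
        rw [ENNReal.ofReal_sub _ (by positivity), ENNReal.ofReal_one,
          ENNReal.ofReal_mul (by positivity), ENNReal.ofReal_natCast, ENNReal.ofReal_pow h1ε]
    _ ≤ (Measure.pi fun _ : Fin N => ℙ) {ω | ∀ j, ∃ i, ω i ∈ Metric.ball (ωs j) r} := by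
        simpa using one_sub_card_mul_pow_le_measure_pi_forall_exists_mem ℙ _ hmiss N
    _ ≤ _ := measure_mono_ae <| hΔae.mono fun ω hω hhit => ⟨hω, by
        simpa [Real.coe_toNNReal Lg hLg] using robustVal_le_scenVal_add_of_forall_exists_mem_ball
          hbdd hfeas hK hωs hJ hr.le hω hhit⟩

/-- Theorem 9 (explicit bound): under boundedness of Δ, l.s.c. of f on X × cl(Δ),
Assumptions 2–4 and the Lipschitz property of g_d, for every N ≥ d, ε ∈ (0,1) and
r > 0 with φ(r) ≥ ε, one has
ℙ^N { ω ∈ Δ^N : J* ≤ g_N(ω) + L_g·r } ≥ 1 − d(1−ε)^N. -/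
theorem stmt_11 {d m : ℕ} (hd : 1 ≤ d)
    (X : Set (EuclideanSpace ℝ (Fin d))) (c : EuclideanSpace ℝ (Fin d))
    (Δ : Set (EuclideanSpace ℝ (Fin m))) (hΔne : Δ.Nonempty)
    (hΔbdd : Bornology.IsBounded Δ)
    (f : EuclideanSpace ℝ (Fin d) → EuclideanSpace ℝ (Fin m) → ℝ)
    (hlsc : LowerSemicontinuousOn (Function.uncurry f) (X ×ˢ closure Δ))
    -- Assumption 2
    (hfeas : ∃ x ∈ X, ∀ δ ∈ Δ, f x δ ≤ 0)
    -- Assumption 3 (X compact convex, f(·,δ) convex)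
    (hXcomp : IsCompact X) (hXconv : Convex ℝ X)
    (hconv : ∀ δ ∈ Δ, ConvexOn ℝ X fun x => f x δ)
    -- probability measure supported on Δ
    (ℙ : Measure (EuclideanSpace ℝ (Fin m))) [IsProbabilityMeasure ℙ]
    (hΔmeas : MeasurableSet Δ) (hΔone : ℙ Δ = 1)
    -- Assumption 4 (regularity)
    (φ : ℝ → ℝ) (hφmono : StrictMonoOn φ (Set.Ici 0))
    (hφrange : ∀ r ∈ Set.Ici (0 : ℝ), φ r ∈ Set.Icc (0 : ℝ) 1)
    (hφreg : ∀ δ ∈ closure Δ, ∀ r : ℝ, 0 < r →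
      ENNReal.ofReal (φ r) ≤ ℙ (Metric.ball δ r ∩ Δ))
    -- Lipschitz condition on g_d
    (Lg : ℝ) (hLg : 0 ≤ Lg)
    (hLip : ∀ ω ω' : Fin d → EuclideanSpace ℝ (Fin m),
      (∀ i, ω i ∈ closure Δ) → (∀ i, ω' i ∈ closure Δ) →
      |scenVal X c f ω - scenVal X c f ω'| ≤
        Lg * Finset.univ.sup' (Finset.univ_nonempty_iff.mpr ⟨⟨0, hd⟩⟩)
          (fun i => ‖ω i - ω' i‖))
    (N : ℕ) (hN : d ≤ N)
    (ε : ℝ) (hε : ε ∈ Set.Ioo (0 : ℝ) 1)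
    (r : ℝ) (hr : 0 < r) (hφr : ε ≤ φ r) :
    ENNReal.ofReal (1 - d * (1 - ε) ^ N) ≤
      (Measure.pi fun _ : Fin N => ℙ)
        {ω : Fin N → EuclideanSpace ℝ (Fin m) |
          (∀ i, ω i ∈ Δ) ∧ robustVal X c f Δ ≤ scenVal X c f ω + Lg * r} :=
  stmt_11_general hd X c Δ hΔne hΔbdd f hlsc hfeas hXcomp hXconv hconv ℙ hΔmeas hΔone φ hφreg Lg hLg
    hLip N ε hε r hr hφr
end

section
/- Suppose Δ ⊆ ℝ^m is nonempty and bounded, f is lower semicontinuous on X × cl(Δ), Assumptions 2–4 hold, and there exists L_g ≥ 0 such that |g_d(ω) − g_d(ω')| ≤ L_g · max_{1≤i≤d} ‖δ_i − δ'_i‖ for all ω, ω' ∈ cl(Δ)^d. Then for every N ≥ d, every confidence level ε̂ ∈ (0,1) and every r > 0 with φ(r) ≥ 1 − ((1−ε̂)/d)^{1/N}, the quantity L_g · r is a uniform level-set bound: ℙ^N{ ω ∈ Δ^N : J* − L_g · r ≤ g_N(ω) } ≥ ε̂. -/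
/-!
Since `g_d` is Lipschitz on the compact set `cl(Δ)^d`, it attains its maximum there at some `ω₀`.
By Helly's theorem, for every `t < J*` some `d` of the constraints already force the objective
above `t`, so `J* ≤ g_d(ω₀)`. If the sample `ω ∈ Δ^N` meets every ball `B_r(ω₀ k)`, the
corresponding `d`-subsample is `r`-close to `ω₀`, whence
`g_N(ω) ≥ g_d(subsample) ≥ g_d(ω₀) - L_g r ≥ J* - L_g r`. Each ball is missed by all `N`
samples with probability at most `(1 - φ(r))^N`, and the choice of `r` makes
`d (1 - φ(r))^N ≤ 1 - ε̂`.
-/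

open MeasureTheory Set

open scoped ENNReal NNReal

theorem Finset.exists_fin_subset_range {α : Type*} [Nonempty α] {n : ℕ} (s : Finset α)
    (hs : s.card ≤ n) : ∃ ω : Fin n → α, (s : Set α) ⊆ Set.range ω := by
  classical
  refine ⟨Function.extend (Fin.castLE hs) (fun k => (s.equivFin.symm k : α))
    (fun _ => Classical.arbitrary α), fun a ha => ⟨Fin.castLE hs (s.equivFin ⟨a, ha⟩), ?_⟩⟩
  rw [(Fin.castLE_injective hs).extend_apply]
  simp

theorem exists_finset_card_le_forall_lt_of_lt_sInf {ι E : Type*} [AddCommGroup E] [Module ℝ E]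
    [TopologicalSpace E] [T2Space E] [FiniteDimensional ℝ E] {X : Set E} (hX : IsCompact X)
    {ℓ : E → ℝ} (hℓv : ConvexOn ℝ X ℓ) (hℓc : LowerSemicontinuousOn ℓ X)
    {g : ι → E → ℝ} (hgv : ∀ i, ConvexOn ℝ X (g i)) (hgc : ∀ i, LowerSemicontinuousOn (g i) X)
    (hfeas : ∃ x ∈ X, ∀ i, g i x ≤ 0) {t : ℝ} (ht : t < sInf (ℓ '' {x ∈ X | ∀ i, g i x ≤ 0})) :
    ∃ I : Finset ι, I.card ≤ Module.finrank ℝ E ∧ ∀ x ∈ X, (∀ i ∈ I, g i x ≤ 0) → t < ℓ x := by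
  classical
  by_contra! hsmall
  -- Helly's theorem for the constraints together with the cut `ℓ ≤ t`; the cut occupies one of
  -- the `finrank + 1` slots, which is why `finrank` constraints suffice.
  let F : Option ι → Set E := fun o => o.elim {x ∈ X | ℓ x ≤ t} fun i => {x ∈ X | g i x ≤ 0}
  have hFv : ∀ o, Convex ℝ (F o) := by
    rintro (_ | i)
    exacts [hℓv.convex_le t, (hgv i).convex_le 0]
  have hFc : ∀ o, IsCompact (F o) := by
    rintro (_ | i)
    exacts [hℓc.isCompact_inter_preimage_Iic hX t, (hgc i).isCompact_inter_preimage_Iic hX 0]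
  obtain ⟨x, hx⟩ := Convex.helly_theorem_compact' hFv hFc fun I hI => by
    by_cases hnone : none ∈ I
    · obtain ⟨x, hxX, hxg, hxℓ⟩ := hsmall I.eraseNone
        (by rw [Finset.card_eraseNone_of_mem hnone]; omega)
      refine ⟨x, mem_iInter₂.2 fun o ho => ?_⟩
      cases o with
      | none => exact ⟨hxX, hxℓ⟩
      | some i => exact ⟨hxX, hxg i (Finset.mem_eraseNone.2 ho)⟩
    · obtain ⟨x, hxX, hxg⟩ := hfeas
      refine ⟨x, mem_iInter₂.2 fun o ho => ?_⟩
      cases o with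
      | none => exact absurd ho hnone
      | some i => exact ⟨hxX, hxg i⟩
  obtain ⟨hxX, hxℓ⟩ : x ∈ X ∧ ℓ x ≤ t := mem_iInter.1 hx none
  have hbdd : BddBelow (ℓ '' {x ∈ X | ∀ i, g i x ≤ 0}) :=
    (hℓc.bddBelow_of_isCompact hX).mono (image_mono (sep_subset _ _))
  have := csInf_le hbdd (mem_image_of_mem ℓ ⟨hxX, fun i => (mem_iInter.1 hx (some i)).2⟩)
  linarith

theorem continuous_sum_mul_apply {d : ℕ} (c : EuclideanSpace ℝ (Fin d)) :
    Continuous fun x : EuclideanSpace ℝ (Fin d) => ∑ i, c i * x i := by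
  fun_prop

theorem convexOn_sum_mul_apply {d : ℕ} {X : Set (EuclideanSpace ℝ (Fin d))} (hX : Convex ℝ X)
    (c : EuclideanSpace ℝ (Fin d)) : ConvexOn ℝ X fun x => ∑ i, c i * x i := by
  have : (fun x : EuclideanSpace ℝ (Fin d) => ∑ i, c i * x i) = innerₛₗ ℝ c := by
    ext x; simp [PiLp.inner_apply, mul_comm]
  rw [this]
  exact (innerₛₗ ℝ c).convexOn hX

theorem lipschitzOnWith_of_abs_sub_le_mul_sup' {ι E : Type*} [Fintype ι]
    [SeminormedAddCommGroup E] {t : Set E} {F : (ι → E) → ℝ}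
    (hne : (Finset.univ : Finset ι).Nonempty) {L : ℝ} (hL : 0 ≤ L)
    (h : ∀ ω ω' : ι → E, (∀ i, ω i ∈ t) → (∀ i, ω' i ∈ t) →
      |F ω - F ω'| ≤ L * Finset.univ.sup' hne fun i => ‖ω i - ω' i‖) :
    LipschitzOnWith L.toNNReal F (univ.pi fun _ => t) := by
  refine LipschitzOnWith.of_dist_le_mul fun ω hω ω' hω' => ?_
  rw [Real.dist_eq, Real.coe_toNNReal _ hL]
  refine (h ω ω' (fun i => hω i (mem_univ i)) (fun i => hω' i (mem_univ i))).trans ?_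
  gcongr
  exact Finset.sup'_le _ _ fun i _ =>
    (dist_eq_norm (ω i) (ω' i)).symm.trans_le (dist_le_pi_dist ω ω' i)

section Scenario

variable {d m : ℕ} {X : Set (EuclideanSpace ℝ (Fin d))} {c : EuclideanSpace ℝ (Fin d)}
  {f : EuclideanSpace ℝ (Fin d) → EuclideanSpace ℝ (Fin m) → ℝ}
  {Δ : Set (EuclideanSpace ℝ (Fin m))}

theorem scenVal_mono {n N : ℕ} (hX : IsCompact X) {ω : Fin N → EuclideanSpace ℝ (Fin m)}
    {ω' : Fin n → EuclideanSpace ℝ (Fin m)} (hω : ∃ x ∈ X, ∀ j, f x (ω j) ≤ 0)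
    (hsub : Set.range ω' ⊆ Set.range ω) : scenVal X c f ω' ≤ scenVal X c f ω := by
  obtain ⟨x, hxX, hx⟩ := hω
  refine csInf_le_csInf ((hX.image (continuous_sum_mul_apply c)).bddBelow.mono
    (image_mono (sep_subset _ _))) ⟨_, mem_image_of_mem _ ⟨hxX, hx⟩⟩ (image_mono ?_)
  rintro y ⟨hyX, hy⟩
  refine ⟨hyX, fun k => ?_⟩
  obtain ⟨j, hj⟩ := hsub (mem_range_self k)
  exact hj ▸ hy j

theorem robustVal_le_of_forall_scenVal_le (hX : IsCompact X) (hXv : Convex ℝ X)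
    (hΔ : Δ.Nonempty) (hconv : ∀ δ ∈ Δ, ConvexOn ℝ X fun x => f x δ)
    (hlsc : ∀ δ ∈ Δ, LowerSemicontinuousOn (fun x => f x δ) X)
    (hfeas : ∃ x ∈ X, ∀ δ ∈ Δ, f x δ ≤ 0) {b : ℝ}
    (hb : ∀ ω : Fin d → EuclideanSpace ℝ (Fin m), (∀ k, ω k ∈ Δ) → scenVal X c f ω ≤ b) :
    robustVal X c f Δ ≤ b := by
  refine le_of_forall_lt_imp_le_of_dense fun t ht => ?_
  have : Nonempty Δ := hΔ.to_subtype
  obtain ⟨I, hI, hIt⟩ := exists_finset_card_le_forall_lt_of_lt_sInf (g := fun δ : Δ => (f · δ))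
    hX (convexOn_sum_mul_apply hXv c)
    ((continuous_sum_mul_apply c).lowerSemicontinuous.lowerSemicontinuousOn X)
    (fun δ => hconv δ δ.2) (fun δ => hlsc δ δ.2) (by simpa using hfeas)
    (by simpa [robustVal] using ht)
  rw [finrank_euclideanSpace_fin] at hI
  obtain ⟨ω, hω⟩ := I.exists_fin_subset_range hI
  obtain ⟨x₀, hx₀X, hx₀⟩ := hfeas
  refine le_trans ?_ (hb (fun k => ω k) fun k => (ω k).2)
  refine le_csInf ⟨_, mem_image_of_mem _ ⟨hx₀X, fun k => hx₀ _ (ω k).2⟩⟩ ?_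
  rintro _ ⟨x, ⟨hxX, hx⟩, rfl⟩
  refine (hIt x hxX fun δ hδ => ?_).le
  obtain ⟨k, rfl⟩ := hω hδ
  exact hx k

theorem scenVal_sub_mul_le_scenVal_of_forall_exists_mem_ball {N : ℕ}
    {T : Set (EuclideanSpace ℝ (Fin m))}
    (hX : IsCompact X) (hfeas : ∃ x ∈ X, ∀ δ ∈ Δ, f x δ ≤ 0) (hΔT : Δ ⊆ T) {L : ℝ≥0}
    (hLip : LipschitzOnWith L (scenVal X c f (N := d)) (univ.pi fun _ => T))
    {ω₀ : Fin d → EuclideanSpace ℝ (Fin m)} (hω₀ : ω₀ ∈ univ.pi fun _ => T) {r : ℝ} (hr : 0 ≤ r)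
    {ω : Fin N → EuclideanSpace ℝ (Fin m)} (hωΔ : ∀ j, ω j ∈ Δ)
    (hω : ∀ k, ∃ j, ω j ∈ Metric.ball (ω₀ k) r) :
    scenVal X c f ω₀ - L * r ≤ scenVal X c f ω := by
  choose σ hσ using hω
  have hdist : dist (ω ∘ σ) ω₀ ≤ r := (dist_pi_le_iff hr).2 fun k => (hσ k).le
  have hσLip := hLip.dist_le_mul (ω ∘ σ) (fun k _ => hΔT (hωΔ _)) ω₀ hω₀
  rw [Real.dist_eq] at hσLip
  obtain ⟨x₀, hx₀X, hx₀⟩ := hfeas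
  calc scenVal X c f ω₀ - L * r ≤ scenVal X c f ω₀ - L * dist (ω ∘ σ) ω₀ := by gcongr
    _ ≤ scenVal X c f (ω ∘ σ) := by
      linarith [neg_abs_le (scenVal X c f (ω ∘ σ) - scenVal X c f ω₀)]
    _ ≤ scenVal X c f ω :=
      scenVal_mono hX ⟨x₀, hx₀X, fun j => hx₀ _ (hωΔ j)⟩ (range_comp_subset_range σ ω)

end Scenario

theorem one_sub_card_mul_pow_le_measure_pi {α ι : Type*} [MeasurableSpace α] [Fintype ι]
    (μ : Measure α) [SigmaFinite μ] {Δ : Set α} (hΔ : μ Δ = 1) {A : ι → Set α} {q : ℝ≥0∞}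
    (hA : ∀ k, μ (Δ \ A k) ≤ q) (N : ℕ) :
    1 - Fintype.card ι * q ^ N ≤
      Measure.pi (fun _ : Fin N => μ) {ω | (∀ j, ω j ∈ Δ) ∧ ∀ k, ∃ j, ω j ∈ A k} := by
  set μN := Measure.pi fun _ : Fin N => μ
  set miss : ι → Set (Fin N → α) := fun k => univ.pi fun _ => Δ \ A k
  have hmiss : ∀ k, μN (miss k) ≤ q ^ N := fun k => by
    simpa [μN, miss, Measure.pi_pi] using pow_le_pow_left' (hA k) N
  have hgood : (univ.pi fun _ => Δ) \ ⋃ k, miss k ⊆ {ω | (∀ j, ω j ∈ Δ) ∧ ∀ k, ∃ j, ω j ∈ A k} := by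
    rintro ω ⟨hωΔ, hωmiss⟩
    simp only [miss, mem_iUnion, mem_univ_pi, mem_sdiff, not_exists, not_forall, not_and,
      not_not] at hωΔ hωmiss
    exact ⟨hωΔ, fun k => (hωmiss k).imp fun j hj => hj (hωΔ j)⟩
  calc 1 - Fintype.card ι * q ^ N ≤ μN (univ.pi fun _ => Δ) - μN (⋃ k, miss k) := by
        rw [show μN (univ.pi fun _ => Δ) = 1 by simp [μN, Measure.pi_pi, hΔ]]
        gcongr
        calc μN (⋃ k, miss k) ≤ ∑ k, μN (miss k) := measure_iUnion_fintype_le _ _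
          _ ≤ ∑ _k : ι, q ^ N := Finset.sum_le_sum fun k _ => hmiss k
          _ = Fintype.card ι * q ^ N := by simp
    _ ≤ μN ((univ.pi fun _ => Δ) \ ⋃ k, miss k) := le_measure_sdiff
    _ ≤ _ := measure_mono hgood

theorem ENNReal.ofReal_le_one_sub_mul_one_sub_ofReal_pow {d N : ℕ} (hd : d ≠ 0) (hN : N ≠ 0)
    {ε : ℝ} (hε₀ : 0 ≤ ε) (hε₁ : ε ≤ 1) {p : ℝ} (hp : 1 - ((1 - ε) / d) ^ (N : ℝ)⁻¹ ≤ p) :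
    ENNReal.ofReal ε ≤ 1 - d * (1 - ENNReal.ofReal p) ^ N := by
  have hbase : 0 ≤ (1 - ε) / d := div_nonneg (by linarith) d.cast_nonneg
  have hq : 1 - ENNReal.ofReal p ≤ ENNReal.ofReal (((1 - ε) / d) ^ (N : ℝ)⁻¹) := calc
    1 - ENNReal.ofReal p ≤ ENNReal.ofReal (1 - p) :=
      tsub_le_iff_right.2 (by simpa using ENNReal.ofReal_add_le (p := 1 - p) (q := p))
    _ ≤ _ := ENNReal.ofReal_le_ofReal (by linarith)
  have hqN : d * (1 - ENNReal.ofReal p) ^ N ≤ ENNReal.ofReal (1 - ε) := calc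
    d * (1 - ENNReal.ofReal p) ^ N ≤ d * ENNReal.ofReal (((1 - ε) / d) ^ (N : ℝ)⁻¹) ^ N := by
      gcongr
    _ = ENNReal.ofReal (d * ((1 - ε) / d)) := by
      rw [← ENNReal.ofReal_pow (by positivity), Real.rpow_inv_natCast_pow hbase hN,
        ENNReal.ofReal_mul d.cast_nonneg, ENNReal.ofReal_natCast]
    _ = ENNReal.ofReal (1 - ε) := by field_simp
  calc ENNReal.ofReal ε = 1 - ENNReal.ofReal (1 - ε) := by
        rw [ENNReal.ofReal_sub _ hε₀, ENNReal.ofReal_one,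
          ENNReal.sub_sub_cancel ENNReal.one_ne_top (ENNReal.ofReal_le_one.2 hε₁)]
    _ ≤ 1 - d * (1 - ENNReal.ofReal p) ^ N := by gcongr

theorem measure_sdiff_le_one_sub {α : Type*} [MeasurableSpace α] {μ : Measure α} {Δ B : Set α}
    (hΔ : μ Δ = 1) (hB : MeasurableSet B) {p : ℝ≥0∞} (hp : p ≤ μ (B ∩ Δ)) :
    μ (Δ \ B) ≤ 1 - p := by
  have hp₁ : p ≤ 1 := hΔ ▸ hp.trans (measure_mono inter_subset_right)
  refine ENNReal.le_sub_of_add_le_right (ne_top_of_le_ne_top ENNReal.one_ne_top hp₁) ?_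
  calc μ (Δ \ B) + p ≤ μ (Δ \ B) + μ (Δ ∩ B) := by rw [inter_comm] at hp; gcongr
    _ = 1 := by rw [measure_sdiff_add_inter Δ hB, hΔ]

theorem stmt_12_general {d m : ℕ} (hd : 1 ≤ d)
    (X : Set (EuclideanSpace ℝ (Fin d))) (c : EuclideanSpace ℝ (Fin d))
    (Δ : Set (EuclideanSpace ℝ (Fin m))) (hΔne : Δ.Nonempty)
    (hΔbdd : Bornology.IsBounded Δ)
    (f : EuclideanSpace ℝ (Fin d) → EuclideanSpace ℝ (Fin m) → ℝ)
    (hlsc : LowerSemicontinuousOn (Function.uncurry f) (X ×ˢ closure Δ))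
    -- Assumption 2
    (hfeas : ∃ x ∈ X, ∀ δ ∈ Δ, f x δ ≤ 0)
    -- Assumption 3 (X compact convex, f(·,δ) convex)
    (hXcomp : IsCompact X) (hXconv : Convex ℝ X)
    (hconv : ∀ δ ∈ Δ, ConvexOn ℝ X fun x => f x δ)
    -- probability measure supported on Δ
    (ℙ : Measure (EuclideanSpace ℝ (Fin m))) [IsProbabilityMeasure ℙ]
    (hΔone : ℙ Δ = 1)
    -- Assumption 4 (regularity)
    (φ : ℝ → ℝ)
    (hφreg : ∀ δ ∈ closure Δ, ∀ r : ℝ, 0 < r →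
      ENNReal.ofReal (φ r) ≤ ℙ (Metric.ball δ r ∩ Δ))
    -- Lipschitz condition on g_d
    (Lg : ℝ) (hLg : 0 ≤ Lg)
    (hLip : ∀ ω ω' : Fin d → EuclideanSpace ℝ (Fin m),
      (∀ i, ω i ∈ closure Δ) → (∀ i, ω' i ∈ closure Δ) →
      |scenVal X c f ω - scenVal X c f ω'| ≤
        Lg * Finset.univ.sup' (Finset.univ_nonempty_iff.mpr ⟨⟨0, hd⟩⟩)
          (fun i => ‖ω i - ω' i‖))
    (N : ℕ) (hN : d ≤ N)
    (εhat : ℝ) (hεhat : εhat ∈ Set.Ioo (0 : ℝ) 1)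
    (r : ℝ) (hr : 0 < r)
    (hφr : 1 - ((1 - εhat) / (d : ℝ)) ^ ((N : ℝ)⁻¹) ≤ φ r) :
    ENNReal.ofReal εhat ≤
      (Measure.pi fun _ : Fin N => ℙ)
        {ω : Fin N → EuclideanSpace ℝ (Fin m) |
          (∀ i, ω i ∈ Δ) ∧ robustVal X c f Δ - Lg * r ≤ scenVal X c f ω} := by
  obtain ⟨δ₀, hδ₀⟩ := hΔne
  have hgLip := lipschitzOnWith_of_abs_sub_le_mul_sup' _ hLg hLip
  obtain ⟨ω₀, hω₀, hmax⟩ := (isCompact_univ_pi fun _ => hΔbdd.isCompact_closure).exists_isMaxOn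
    ⟨fun _ => δ₀, fun _ _ => subset_closure hδ₀⟩ hgLip.continuousOn
  have hJ : robustVal X c f Δ ≤ scenVal X c f ω₀ :=
    robustVal_le_of_forall_scenVal_le hXcomp hXconv ⟨δ₀, hδ₀⟩ hconv
      (fun δ hδ => hlsc.comp (continuous_id.prodMk continuous_const).continuousOn
        fun x hx => ⟨hx, subset_closure hδ⟩) hfeas
      fun ω hω => hmax fun k _ => subset_closure (hω k)
  have hnear : {ω : Fin N → EuclideanSpace ℝ (Fin m) |
      (∀ j, ω j ∈ Δ) ∧ ∀ k, ∃ j, ω j ∈ Metric.ball (ω₀ k) r} ⊆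
      {ω | (∀ i, ω i ∈ Δ) ∧ robustVal X c f Δ - Lg * r ≤ scenVal X c f ω} := by
    rintro ω ⟨hωΔ, hω⟩
    have := scenVal_sub_mul_le_scenVal_of_forall_exists_mem_ball hXcomp hfeas subset_closure
      hgLip hω₀ hr.le hωΔ hω
    rw [Real.coe_toNNReal _ hLg] at this
    exact ⟨hωΔ, by linarith⟩
  calc ENNReal.ofReal εhat ≤ 1 - d * (1 - ENNReal.ofReal (φ r)) ^ N :=
        ENNReal.ofReal_le_one_sub_mul_one_sub_ofReal_pow (by omega) (by omega) hεhat.1.le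
          hεhat.2.le hφr
    _ ≤ _ := by
        simpa using one_sub_card_mul_pow_le_measure_pi ℙ hΔone
          (fun k => measure_sdiff_le_one_sub hΔone Metric.isOpen_ball.measurableSet
            (hφreg (ω₀ k) (hω₀ k (mem_univ k)) r hr)) N
    _ ≤ _ := measure_mono hnear

/-- Corollary (explicit uniform level-set bound): under the hypotheses of Theorem 9,
for every N ≥ d, confidence ε̂ ∈ (0,1) and r > 0 with φ(r) ≥ 1 − ((1−ε̂)/d)^{1/N},
the quantity L_g·r is a ULB: ℙ^N { ω ∈ Δ^N : J* − L_g·r ≤ g_N(ω) } ≥ ε̂. -/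
theorem stmt_12 {d m : ℕ} (hd : 1 ≤ d)
    (X : Set (EuclideanSpace ℝ (Fin d))) (c : EuclideanSpace ℝ (Fin d))
    (Δ : Set (EuclideanSpace ℝ (Fin m))) (hΔne : Δ.Nonempty)
    (hΔbdd : Bornology.IsBounded Δ)
    (f : EuclideanSpace ℝ (Fin d) → EuclideanSpace ℝ (Fin m) → ℝ)
    (hlsc : LowerSemicontinuousOn (Function.uncurry f) (X ×ˢ closure Δ))
    -- Assumption 2
    (hfeas : ∃ x ∈ X, ∀ δ ∈ Δ, f x δ ≤ 0)
    -- Assumption 3 (X compact convex, f(·,δ) convex)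
    (hXcomp : IsCompact X) (hXconv : Convex ℝ X)
    (hconv : ∀ δ ∈ Δ, ConvexOn ℝ X fun x => f x δ)
    -- probability measure supported on Δ
    (ℙ : Measure (EuclideanSpace ℝ (Fin m))) [IsProbabilityMeasure ℙ]
    (hΔmeas : MeasurableSet Δ) (hΔone : ℙ Δ = 1)
    -- Assumption 4 (regularity)
    (φ : ℝ → ℝ) (hφmono : StrictMonoOn φ (Set.Ici 0))
    (hφrange : ∀ r ∈ Set.Ici (0 : ℝ), φ r ∈ Set.Icc (0 : ℝ) 1)
    (hφreg : ∀ δ ∈ closure Δ, ∀ r : ℝ, 0 < r →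
      ENNReal.ofReal (φ r) ≤ ℙ (Metric.ball δ r ∩ Δ))
    -- Lipschitz condition on g_d
    (Lg : ℝ) (hLg : 0 ≤ Lg)
    (hLip : ∀ ω ω' : Fin d → EuclideanSpace ℝ (Fin m),
      (∀ i, ω i ∈ closure Δ) → (∀ i, ω' i ∈ closure Δ) →
      |scenVal X c f ω - scenVal X c f ω'| ≤
        Lg * Finset.univ.sup' (Finset.univ_nonempty_iff.mpr ⟨⟨0, hd⟩⟩)
          (fun i => ‖ω i - ω' i‖))
    (N : ℕ) (hN : d ≤ N)
    (εhat : ℝ) (hεhat : εhat ∈ Set.Ioo (0 : ℝ) 1)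
    (r : ℝ) (hr : 0 < r)
    (hφr : 1 - ((1 - εhat) / (d : ℝ)) ^ ((N : ℝ)⁻¹) ≤ φ r) :
    ENNReal.ofReal εhat ≤
      (Measure.pi fun _ : Fin N => ℙ)
        {ω : Fin N → EuclideanSpace ℝ (Fin m) |
          (∀ i, ω i ∈ Δ) ∧ robustVal X c f Δ - Lg * r ≤ scenVal X c f ω} :=
  stmt_12_general hd X c Δ hΔne hΔbdd f hlsc hfeas hXcomp hXconv hconv ℙ hΔone φ hφreg Lg hLg hLip N
    hN εhat hεhat r hr hφr
end
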